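/- arXiv:2502.03839 — 3 statements merged into one kernel-verified Lean document; each statement's English description precedes it below -/
import Mathlib

section
/- For all integers k ≥ 2 and n > 2 with k dividing n, there exists a k-k-NC-BN on n nodes for which the size of the minimum control node set is n/k. -/
namespace BN

variable {n : ℕ}

/-- The Boolean function `f` depends on input `j`. -/
def Depends (f : (Fin n → Bool) → Bool) (j : Fin n) : Prop :=
  ∃ x : Fin n → Bool, f (Function.update x j (!(x j))) ≠ f x

/-- The set of incoming nodes of node `i` (Γ⁻). -/
def inSet (F : Fin n → (Fin n → Bool) → Bool) (i : Fin n) : Set (Fin n) :=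
  {j | Depends (F i) j}

/-- The set of outgoing nodes of node `i` (Γ⁺). -/
def outSet (F : Fin n → (Fin n → Bool) → Bool) (i : Fin n) : Set (Fin n) :=
  {j | Depends (F j) i}

/-- The controlled trajectory: nodes in `U` get an xor-control signal. -/
def traj (F : Fin n → (Fin n → Bool) → Bool) (U : Finset (Fin n))
    (u : ℕ → Fin n → Bool) (x0 : Fin n → Bool) : ℕ → Fin n → Bool
  | 0 => x0
  | t + 1 => fun i =>
      if i ∈ U then Bool.xor (u t i) (F i (traj F U u x0 t))
      else F i (traj F U u x0 t)

/-- `U` is a control node set: any initial state can be driven to any target state. -/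
def IsControlSet (F : Fin n → (Fin n → Bool) → Bool) (U : Finset (Fin n)) : Prop :=
  ∀ x0 xT : Fin n → Bool, ∃ t : ℕ, 1 ≤ t ∧ ∃ u : ℕ → Fin n → Bool, traj F U u x0 t = xT

/-- `IsNC S f`: `f` is a nested canalyzing function of the inputs in `S`:
it is constant, or of the form `ℓ ∨ g` or `ℓ ∧ g` with `ℓ` a literal of some
input in `S` and `g` nested canalyzing on the remaining inputs. -/
inductive IsNC : Finset (Fin n) → ((Fin n → Bool) → Bool) → Prop
  | const (S : Finset (Fin n)) (b : Bool) : IsNC S fun _ => b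
  | or (S : Finset (Fin n)) (j : Fin n) (s : Bool) (g : (Fin n → Bool) → Bool) :
      j ∈ S → IsNC (S.erase j) g → IsNC S fun x => (x j == s) || g x
  | and (S : Finset (Fin n)) (j : Fin n) (s : Bool) (g : (Fin n → Bool) → Bool) :
      j ∈ S → IsNC (S.erase j) g → IsNC S fun x => (x j == s) && g x

/-- A `k`-`k`-NC-BN: each function is nested canalyzing on `k` distinct inputs and
every node has indegree `k` and outdegree `k`. -/
def IsKKNCBN (k : ℕ) (F : Fin n → (Fin n → Bool) → Bool) : Prop :=
  (∀ i, ∃ S : Finset (Fin n), S.card = k ∧ IsNC S (F i)) ∧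
  ∀ i, (inSet F i).ncard = k ∧ (outSet F i).ncard = k

section Construction

variable (k : ℕ)

/-- Block of node `i`: nodes with the same quotient by `k`. -/
def blkF (i : Fin n) : Finset (Fin n) :=
  Finset.univ.filter (fun j => j.val / k = i.val / k)

/-- Predecessor node inside a block. -/
def predF (i : Fin n) : Fin n := ⟨i.val - 1, lt_of_le_of_lt (Nat.sub_le _ _) i.isLt⟩

/-- The Boolean network. -/
def myF (i : Fin n) (x : Fin n → Bool) : Bool :=
  if i.val % k = 0 then decide (∀ j ∈ blkF k i, x j = true)
  else (x (predF i) || decide (∀ j ∈ (blkF k i).erase (predF i), x j = false))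

lemma mem_blkF {i j : Fin n} : j ∈ blkF k i ↔ j.val / k = i.val / k := by
  simp [blkF]

lemma self_mem_blkF (i : Fin n) : i ∈ blkF k i := by simp [blkF]

variable {k}

lemma pred_div (hk : 0 < k) {i : ℕ} (h : i % k ≠ 0) : (i - 1) / k = i / k := by
  have h1 : i % k ≥ 1 := Nat.one_le_iff_ne_zero.mpr h
  have h2 : i = k * (i / k) + i % k := (Nat.div_add_mod i k).symm
  have h3 : i - 1 = k * (i / k) + (i % k - 1) := by omega
  have h4 : i % k - 1 < k := by
    have := Nat.mod_lt i hk
    omega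
  rw [h3, Nat.mul_add_div hk, Nat.div_eq_of_lt h4]
  omega

lemma predF_mem_blkF (hk : 0 < k) {i : Fin n} (h : i.val % k ≠ 0) :
    predF i ∈ blkF k i := by
  simp only [mem_blkF, predF]
  exact pred_div hk h

lemma predF_ne {i : Fin n} (h : i.val % k ≠ 0) : predF i ≠ i := by
  have : i.val ≠ 0 := fun he => h (by simp [he])
  intro he
  have := congrArg Fin.val he
  simp only [predF] at this
  omega

/-- `myF i` only reads coordinates in the block of `i`. -/
lemma myF_local (hk : 0 < k) {i : Fin n} {x y : Fin n → Bool}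
    (h : ∀ j, j ∈ blkF k i → x j = y j) : myF k i x = myF k i y := by
  unfold myF
  have h1 : (decide (∀ j ∈ blkF k i, x j = true)) = decide (∀ j ∈ blkF k i, y j = true) := by
    apply decide_eq_decide.mpr
    constructor <;> intro hh j hj
    · rw [← h j hj]; exact hh j hj
    · rw [h j hj]; exact hh j hj
  have h2 : (decide (∀ j ∈ (blkF k i).erase (predF i), x j = false))
      = decide (∀ j ∈ (blkF k i).erase (predF i), y j = false) := by
    apply decide_eq_decide.mpr
    constructor <;> intro hh j hj
    · rw [← h j (Finset.mem_of_mem_erase hj)]; exact hh j hj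
    · rw [h j (Finset.mem_of_mem_erase hj)]; exact hh j hj
  split
  · exact h1
  · rename_i hne
    rw [h _ (predF_mem_blkF hk hne), h2]

/-- Shift behavior: on a block with a true coordinate, non-head nodes copy the predecessor. -/
lemma myF_shift (hk : 0 < k) {i : Fin n} (hi : i.val % k ≠ 0) {x : Fin n → Bool}
    (hw : ∃ j ∈ blkF k i, x j = true) : myF k i x = x (predF i) := by
  unfold myF
  rw [if_neg hi]
  cases hxp : x (predF i)
  · simp only [Bool.false_or]
    obtain ⟨j, hj, hxj⟩ := hw
    have hjne : j ≠ predF i := fun he => by rw [he, hxp] at hxj; exact Bool.false_ne_true hxj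
    simp only [decide_eq_false_iff_not]
    intro hall
    have := hall j (Finset.mem_erase.mpr ⟨hjne, hj⟩)
    rw [hxj] at this; exact Bool.noConfusion this
  · simp

/-- On an all-false block, non-head nodes become true. -/
lemma myF_zero (hk : 0 < k) {i : Fin n} (hi : i.val % k ≠ 0) {x : Fin n → Bool}
    (hz : ∀ j ∈ blkF k i, x j = false) : myF k i x = true := by
  unfold myF
  rw [if_neg hi]
  have : decide (∀ j ∈ (blkF k i).erase (predF i), x j = false) = true := by
    simp only [decide_eq_true_eq]
    intro j hj; exact hz j (Finset.mem_of_mem_erase hj)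
  rw [this, Bool.or_true]

lemma node_lt (hk : 0 < k) (hdvd : k ∣ n) {b j : ℕ} (hb : b < n / k) (hj : j < k) :
    b * k + j < n := by
  have h2 : (b + 1) * k ≤ (n / k) * k := Nat.mul_le_mul_right k hb
  have hn2 : (n / k) * k = n := Nat.div_mul_cancel hdvd
  have h3 : (b + 1) * k = b * k + k := by ring
  omega

lemma card_blkF (hk : 0 < k) (hdvd : k ∣ n) (i : Fin n) : (blkF k i).card = k := by
  have key : (blkF k i).card = (Finset.univ : Finset (Fin k)).card := by
    apply Finset.card_bij (fun (j : Fin n) _ => (⟨j.val % k, Nat.mod_lt _ hk⟩ : Fin k))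
    · intro a ha; exact Finset.mem_univ _
    · intro a1 h1 a2 h2 he
      rw [mem_blkF] at h1 h2
      simp only [Fin.mk.injEq] at he
      have d1 := Nat.div_add_mod a1.val k
      have d2 := Nat.div_add_mod a2.val k
      rw [h1, h2] at *
      apply Fin.ext
      omega
    · intro r _
      have hblt : i.val / k < n / k := Nat.div_lt_div_of_lt_of_dvd hdvd i.isLt
      refine ⟨⟨(i.val / k) * k + r.val, node_lt hk hdvd hblt r.isLt⟩, ?_, ?_⟩
      · rw [mem_blkF]
        simp only
        rw [Nat.add_comm, Nat.add_mul_div_right _ _ hk, Nat.div_eq_of_lt r.isLt]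
        omega
      · apply Fin.ext
        simp only
        rw [Nat.add_comm, Nat.add_mul_mod_self_right, Nat.mod_eq_of_lt r.isLt]
  rw [key, Finset.card_univ, Fintype.card_fin]


lemma isNC_pattern (S : Finset (Fin n)) (sgn : Bool) :
    IsNC S (fun x => decide (∀ j ∈ S, x j = sgn)) := by
  induction S using Finset.induction_on with
  | empty =>
      have he : (fun x : Fin n → Bool => decide (∀ j ∈ (∅ : Finset (Fin n)), x j = sgn))
          = fun _ => true := by
        funext x; simp
      rw [he]; exact IsNC.const _ true
  | @insert a s ha ih =>
      have he : (fun x : Fin n → Bool => decide (∀ j ∈ insert a s, x j = sgn))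
          = fun x => (x a == sgn) && decide (∀ j ∈ s, x j = sgn) := by
        funext x
        cases hx : x a <;> cases sgn <;> simp [Finset.forall_mem_insert, hx]
      rw [he]
      exact IsNC.and _ a sgn _ (Finset.mem_insert_self a s)
        (by rw [Finset.erase_insert ha]; exact ih)

lemma isNC_myF (hk : 0 < k) (i : Fin n) : IsNC (blkF k i) (myF k i) := by
  by_cases h : i.val % k = 0
  · have he : myF k i = fun x => decide (∀ j ∈ blkF k i, x j = true) := by
      funext x; simp [myF, h]
    rw [he]; exact isNC_pattern _ _
  · have he : myF k i = fun x => (x (predF i) == true)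
        || decide (∀ j ∈ (blkF k i).erase (predF i), x j = false) := by
      funext x; simp [myF, h]
    rw [he]
    exact IsNC.or _ (predF i) true _ (predF_mem_blkF hk h) (isNC_pattern _ _)


lemma depends_myF (hk : 0 < k) {i j : Fin n} (hj : j ∈ blkF k i) : Depends (myF k i) j := by
  by_cases h0 : i.val % k = 0
  · refine ⟨fun _ => true, ?_⟩
    have hR : myF k i (fun _ => true) = true := by simp [myF, h0]
    have hL : myF k i (Function.update (fun (_ : Fin n) => true) j (!true)) = false := by
      simp only [myF, if_pos h0, decide_eq_false_iff_not]
      intro hall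
      have h5 := hall j hj
      rw [Function.update_self] at h5
      exact Bool.noConfusion h5
    show myF k i (Function.update (fun _ => true) j (!true)) ≠ myF k i (fun _ => true)
    rw [hL, hR]
    exact Bool.false_ne_true
  · by_cases hp : j = predF i
    · subst hp
      refine ⟨fun t => decide (t = i), ?_⟩
      have hxp : (fun (t : Fin n) => decide (t = i)) (predF i) = false := by
        simp only [decide_eq_false_iff_not]
        exact predF_ne h0
      have hR : myF k i (fun t => decide (t = i)) = false := by
        simp only [myF, if_neg h0, hxp, Bool.false_or, decide_eq_false_iff_not]
        intro hall
        have h5 := hall i (Finset.mem_erase.mpr ⟨Ne.symm (predF_ne h0), self_mem_blkF k i⟩)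
        simp at h5
      have hL : myF k i (Function.update (fun (t : Fin n) => decide (t = i)) (predF i)
          (!((fun (t : Fin n) => decide (t = i)) (predF i)))) = true := by
        simp only [myF, if_neg h0, Function.update_self, hxp]
        rfl
      intro hc
      rw [hL, hR] at hc
      exact Bool.noConfusion hc
    · refine ⟨fun _ => false, ?_⟩
      have hR : myF k i (fun _ => false) = true := by
        simp [myF, h0]
      have hL : myF k i (Function.update (fun (_ : Fin n) => false) j (!false)) = false := by
        simp only [myF, if_neg h0]
        have h1 : Function.update (fun (_ : Fin n) => false) j (!false) (predF i) = false := by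
          rw [Function.update_of_ne (fun he => hp he.symm)]
        have h2 : decide (∀ j' ∈ (blkF k i).erase (predF i),
            Function.update (fun (_ : Fin n) => false) j (!false) j' = false) = false := by
          simp only [decide_eq_false_iff_not]
          intro hall
          have h5 := hall j (Finset.mem_erase.mpr ⟨hp, hj⟩)
          rw [Function.update_self] at h5
          exact Bool.noConfusion h5
        rw [h1, h2, Bool.false_or]
      show myF k i (Function.update (fun _ => false) j (!false)) ≠ myF k i (fun _ => false)
      rw [hL, hR]
      exact Bool.false_ne_true

lemma inSet_eq (hk : 0 < k) (i : Fin n) : inSet (myF k) i = ↑(blkF k i) := by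
  ext j
  simp only [inSet, Set.mem_setOf_eq, Finset.mem_coe]
  constructor
  · intro hd
    by_contra hj
    obtain ⟨x, hx⟩ := hd
    apply hx
    apply myF_local hk
    intro j' hj'
    rw [Function.update_of_ne (fun he => hj (by rw [← he]; exact hj'))]
  · exact depends_myF hk

lemma outSet_eq (hk : 0 < k) (i : Fin n) : outSet (myF k) i = ↑(blkF k i) := by
  ext j
  simp only [outSet, Set.mem_setOf_eq, Finset.mem_coe]
  have h1 := Set.ext_iff.mp (inSet_eq hk j) i
  simp only [inSet, Set.mem_setOf_eq, Finset.mem_coe] at h1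
  rw [h1, mem_blkF, mem_blkF]
  exact eq_comm


lemma pred_mod (hk : 0 < k) {i : ℕ} (h : i % k ≠ 0) : (i - 1) % k = i % k - 1 := by
  have h1 : i % k ≥ 1 := Nat.one_le_iff_ne_zero.mpr h
  have h2 : i = k * (i / k) + i % k := (Nat.div_add_mod i k).symm
  have h3 : i - 1 = k * (i / k) + (i % k - 1) := by omega
  have h4 : i % k - 1 < k := by
    have := Nat.mod_lt i hk
    omega
  rw [h3, Nat.mul_add_mod, Nat.mod_eq_of_lt h4]

/-- One controlled step, seen from block `b`: all non-controlled nodes of block `b`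
follow their functions. -/
def StepB (k b : ℕ) (x y : Fin n → Bool) : Prop :=
  ∀ i : Fin n, i.val / k = b → i.val % k ≠ 0 → y i = myF k i x

/-- Reachability in exactly `t` controlled steps, as seen from block `b`. -/
def ReachB (k b t : ℕ) (x y : Fin n → Bool) : Prop :=
  ∃ c : ℕ → Fin n → Bool, c 0 = x ∧ (∀ s < t, StepB k b (c s) (c (s+1))) ∧
    ∀ i : Fin n, i.val / k = b → c t i = y i

lemma StepB_congr (hk : 0 < k) {b : ℕ} {x x' y : Fin n → Bool}
    (h : ∀ i : Fin n, i.val / k = b → x i = x' i)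
    (hs : StepB k b x' y) : StepB k b x y := by
  intro i hib hi0
  have hl : myF k i x = myF k i x' :=
    myF_local hk (fun j hj => h j (by rw [mem_blkF] at hj; rw [hj, hib]))
  rw [hl]
  exact hs i hib hi0

lemma ReachB_zero {b : ℕ} {x y : Fin n → Bool} (h : ∀ i : Fin n, i.val / k = b → x i = y i) :
    ReachB k b 0 x y :=
  ⟨fun _ => x, rfl, fun s hs => absurd hs (Nat.not_lt_zero s), h⟩

lemma ReachB_single {b : ℕ} {x y : Fin n → Bool}
    (h : ∀ i : Fin n, i.val / k = b → i.val % k ≠ 0 → y i = myF k i x) :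
    ReachB k b 1 x y := by
  refine ⟨fun s => if s = 0 then x else y, rfl, ?_, ?_⟩
  · intro s hs
    have hs0 : s = 0 := by omega
    subst hs0
    simp only [if_pos rfl, if_neg one_ne_zero]
    exact h
  · intro i _
    simp

lemma ReachB_comp (hk : 0 < k) {b t1 t2 : ℕ} {x w y : Fin n → Bool} (h1 : ReachB k b t1 x w)
    (h2 : ReachB k b t2 w y) : ReachB k b (t1 + t2) x y := by
  obtain ⟨c1, hc10, hc1s, hc1e⟩ := h1
  obtain ⟨c2, hc20, hc2s, hc2e⟩ := h2
  refine ⟨fun s => if s ≤ t1 then c1 s else c2 (s - t1), ?_, ?_, ?_⟩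
  · simp [hc10]
  · intro s hs
    by_cases hs1 : s + 1 ≤ t1
    · simp only [if_pos (by omega : s ≤ t1), if_pos hs1]
      exact hc1s s (by omega)
    · by_cases hseq : s = t1
      · subst hseq
        simp only [if_pos le_rfl, if_neg hs1, Nat.add_sub_cancel_left]
        have ht2 : 0 < t2 := by omega
        have hstep := hc2s 0 ht2
        rw [hc20] at hstep
        exact StepB_congr hk (fun i hib => hc1e i hib) hstep
      · simp only [if_neg (by omega : ¬ s ≤ t1), if_neg hs1,
          (by omega : s + 1 - t1 = (s - t1) + 1)]
        exact hc2s (s - t1) (by omega)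
  · intro i hib
    by_cases ht : t1 + t2 ≤ t1
    · simp only [if_pos ht]
      have ht2 : t2 = 0 := by omega
      have he1 := hc1e i hib
      have he2 := hc2e i hib
      rw [ht2] at he2
      rw [hc20] at he2
      rw [(by omega : t1 + t2 = t1), he1, ← he2]
    · simp only [if_neg ht, Nat.add_sub_cancel_left]
      exact hc2e i hib

lemma ReachB_pad (hk : 0 < k) {b : ℕ} (p : ℕ) :
    ReachB k b p (fun _ : Fin n => true) (fun _ => true) := by
  refine ⟨fun _ => fun _ => true, rfl, ?_, fun i _ => rfl⟩
  intro s _ i _ hi0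
  rw [myF_shift hk hi0 ⟨i, self_mem_blkF k i, rfl⟩]

lemma reach_zero_blk (hk : 0 < k) {b : ℕ} :
    ∀ d, ∀ c : Fin n → Bool, (∀ i : Fin n, i.val / k = b → i.val % k < k - d → c i = false) →
      ∃ t ≤ d, ReachB k b t c (fun _ : Fin n => false)
  | 0, c, h =>
    ⟨0, le_rfl, ReachB_zero (fun i hib =>
      h i hib (by have := Nat.mod_lt i.val hk; omega))⟩
  | d + 1, c, h => by
    by_cases hall : ∀ i : Fin n, i.val / k = b → c i = false
    · exact ⟨0, by omega, ReachB_zero hall⟩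
    · push_neg at hall
      obtain ⟨i0, hi0b, hi0t⟩ := hall
      have hi0t' : c i0 = true := by
        cases hc : c i0
        · exact absurd hc hi0t
        · rfl
      set c' : Fin n → Bool :=
        fun i => if i.val / k = b ∧ i.val % k ≠ 0 then c (predF i) else false with hc'
      have hstep : ∀ i : Fin n, i.val / k = b → i.val % k ≠ 0 → c' i = myF k i c := by
        intro i hib hi0
        have hw : ∃ j ∈ blkF k i, c j = true :=
          ⟨i0, by rw [mem_blkF, hi0b, hib], hi0t'⟩
        rw [myF_shift hk hi0 hw, hc']
        simp only [if_pos (And.intro hib hi0)]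
      have hinv : ∀ i : Fin n, i.val / k = b → i.val % k < k - d → c' i = false := by
        intro i hib hlt
        rw [hc']
        by_cases hcase : i.val / k = b ∧ i.val % k ≠ 0
        · simp only [if_pos hcase]
          apply h (predF i)
          · show (i.val - 1) / k = b
            rw [pred_div hk hcase.2, hib]
          · show (i.val - 1) % k < k - (d + 1)
            rw [pred_mod hk hcase.2]
            omega
        · simp only [if_neg hcase]
      obtain ⟨t, htle, hr⟩ := reach_zero_blk hk d c' hinv
      exact ⟨t + 1, by omega, by
        have := ReachB_comp hk (ReachB_single hstep) hr
        rwa [(by omega : 1 + t = t + 1)] at this⟩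


lemma wstate_bound (hk : 0 < k) (hdvd : k ∣ n) {i : Fin n} {r : ℕ} (h2 : i.val % k ≤ r)
    (hr : r ≤ k - 1) : i.val + (k - 1 - r) < n := by
  have hq : i.val / k < n / k := Nat.div_lt_div_of_lt_of_dvd hdvd i.isLt
  have hd := Nat.div_add_mod i.val k
  have hmod : i.val % k < k := Nat.mod_lt _ hk
  have hb := node_lt hk hdvd hq (show i.val % k + (k - 1 - r) < k by omega)
  have hc : i.val / k * k = k * (i.val / k) := Nat.mul_comm _ _
  omega

/-- Intermediate states of the write phase. -/
def wstate (k b r : ℕ) (y : Fin n → Bool) : Fin n → Bool := fun i =>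
  if h : i.val / k = b ∧ i.val % k ≤ r ∧ i.val + (k - 1 - r) < n then
    y ⟨i.val + (k - 1 - r), h.2.2⟩ else true

lemma wstate_eval (hk : 0 < k) (hdvd : k ∣ n) {b r : ℕ} {y : Fin n → Bool} {i : Fin n}
    (hib : i.val / k = b) (hr : r ≤ k - 1) :
    wstate k b r y i = if h2 : i.val % k ≤ r then y ⟨i.val + (k - 1 - r), wstate_bound hk hdvd h2 hr⟩
      else true := by
  unfold wstate
  by_cases h2 : i.val % k ≤ r
  · rw [dif_pos ⟨hib, h2, wstate_bound hk hdvd h2 hr⟩, dif_pos h2]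
  · rw [dif_neg (fun hcon => h2 hcon.2.1), dif_neg h2]

lemma ReachB_write (hk2 : 2 ≤ k) (hdvd : k ∣ n) (b : ℕ) (y : Fin n → Bool) :
    ReachB k b (k - 1) (wstate k b 0 y) y := by
  have hk : 0 < k := by omega
  refine ⟨fun s => wstate k b s y, rfl, ?_, ?_⟩
  · intro s hs i hib hip
    have hb : b < n / k := hib ▸ Nat.div_lt_div_of_lt_of_dvd hdvd i.isLt
    have htnv : b * k + (k - 1) < n := node_lt hk hdvd hb (by omega)
    set tn : Fin n := ⟨b * k + (k - 1), htnv⟩ with htn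
    have htnd : tn.val / k = b := by
      show (b * k + (k - 1)) / k = b
      rw [Nat.add_comm, Nat.add_mul_div_right _ _ hk, Nat.div_eq_of_lt (by omega)]
      omega
    have htnm : tn.val % k = k - 1 := by
      show (b * k + (k - 1)) % k = k - 1
      rw [Nat.add_comm, Nat.add_mul_mod_self_right, Nat.mod_eq_of_lt (by omega)]
    have htnval : wstate k b s y tn = true := by
      rw [wstate_eval hk hdvd htnd (by omega : s ≤ k - 1), dif_neg (by omega)]
    have hwit : ∃ j ∈ blkF k i, wstate k b s y j = true :=
      ⟨tn, by rw [mem_blkF, htnd, hib], htnval⟩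
    show wstate k b (s+1) y i = myF k i (wstate k b s y)
    rw [myF_shift hk hip hwit]
    have hpd : (predF i).val / k = b := by
      show (i.val - 1) / k = b
      rw [pred_div hk hip, hib]
    have hpm : (predF i).val % k = i.val % k - 1 := pred_mod hk hip
    have hpv : (predF i).val = i.val - 1 := rfl
    rw [wstate_eval hk hdvd hib (by omega : s + 1 ≤ k - 1),
        wstate_eval hk hdvd hpd (by omega : s ≤ k - 1)]
    have hmod : i.val % k < k := Nat.mod_lt _ hk
    have hip1 : 1 ≤ i.val % k := Nat.one_le_iff_ne_zero.mpr hip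
    have hiv1 : 1 ≤ i.val := by
      have hd2 := Nat.div_add_mod i.val k
      omega
    by_cases h2 : i.val % k ≤ s + 1
    · rw [dif_pos h2, dif_pos (show (predF i).val % k ≤ s by rw [hpm]; omega)]
      congr 1
      apply Fin.ext
      show i.val + (k - 1 - (s + 1)) = (i.val - 1) + (k - 1 - s)
      omega
    · rw [dif_neg h2, dif_neg (show ¬ (predF i).val % k ≤ s by rw [hpm]; omega)]
  · intro i hib
    show wstate k b (k - 1) y i = y i
    rw [wstate_eval hk hdvd hib (le_refl (k-1)), dif_pos (by have := Nat.mod_lt i.val hk; omega)]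
    congr 1
    apply Fin.ext
    show i.val + (k - 1 - (k - 1)) = i.val
    omega

lemma ReachB_total (hk2 : 2 ≤ k) (hdvd : k ∣ n) (b : ℕ) (x y : Fin n → Bool) :
    ReachB k b (2 * k + 1) x y := by
  have hk : 0 < k := by omega
  by_cases hbe : ∃ i : Fin n, i.val / k = b
  swap
  · exact ⟨fun _ => x, rfl, fun s _ i hib _ => absurd ⟨i, hib⟩ hbe,
      fun i hib => absurd ⟨i, hib⟩ hbe⟩
  set c1 : Fin n → Bool :=
    fun i => if i.val / k = b ∧ i.val % k ≠ 0 then myF k i x else false with hc1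
  have r1 : ReachB k b 1 x c1 := ReachB_single (fun i hib hi0 => by
    rw [hc1]; simp only [if_pos (And.intro hib hi0)])
  have hinv : ∀ i : Fin n, i.val / k = b → i.val % k < k - (k - 1) → c1 i = false := by
    intro i hib hlt
    have h0 : i.val % k = 0 := by omega
    rw [hc1]
    simp [h0]
  obtain ⟨t, htle, r2⟩ := reach_zero_blk hk (k - 1) c1 hinv
  have r3 : ReachB k b 1 (fun _ : Fin n => false) (fun _ : Fin n => true) :=
    ReachB_single (fun i hib hi0 => (myF_zero hk hi0 (fun j _ => rfl)).symm)
  have r4 := ReachB_pad (n := n) hk (b := b) (k - 1 - t)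
  have r5 : ReachB k b 1 (fun _ : Fin n => true) (wstate k b 0 y) := by
    apply ReachB_single
    intro i hib hi0
    rw [myF_shift hk hi0 ⟨i, self_mem_blkF k i, rfl⟩]
    unfold wstate
    rw [dif_neg (fun hcon => hi0 (Nat.le_zero.mp hcon.2.1))]
  have r6 := ReachB_write hk2 hdvd b y
  have hcomp := ReachB_comp hk r1 (ReachB_comp hk r2 (ReachB_comp hk r3
    (ReachB_comp hk r4 (ReachB_comp hk r5 r6))))
  rwa [(by omega : 1 + (t + (1 + ((k - 1 - t) + (1 + (k - 1))))) = 2 * k + 1)] at hcomp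


lemma isControlSet_myF (hk2 : 2 ≤ k) (hdvd : k ∣ n) (U : Finset (Fin n))
    (hU : ∀ i : Fin n, i ∈ U ↔ i.val % k = 0) : IsControlSet (myF k) U := by
  have hk : 0 < k := by omega
  intro x0 xT
  refine ⟨2 * k + 1, by omega, ?_⟩
  have h := fun b => ReachB_total hk2 hdvd b x0 xT
  choose c hc0 hcs hce using h
  set Z : ℕ → Fin n → Bool := fun s i => c (i.val / k) s i with hZ
  have hZ0 : Z 0 = x0 := by
    funext i
    show c (i.val / k) 0 i = x0 i
    rw [hc0]
  have hZstep : ∀ s, s < 2 * k + 1 → ∀ i : Fin n, i.val % k ≠ 0 →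
      Z (s+1) i = myF k i (Z s) := by
    intro s hs i hi0
    have hstep := hcs (i.val / k) s hs i rfl hi0
    show c (i.val / k) (s+1) i = myF k i (Z s)
    rw [hstep]
    apply myF_local hk
    intro j hj
    rw [mem_blkF] at hj
    show c (i.val / k) s j = c (j.val / k) s j
    rw [hj]
  have hZe : Z (2 * k + 1) = xT := by
    funext i
    exact hce (i.val / k) i rfl
  refine ⟨fun s i => Bool.xor (Z (s+1) i) (myF k i (Z s)), ?_⟩
  have key : ∀ s, s ≤ 2 * k + 1 →
      traj (myF k) U (fun s i => Bool.xor (Z (s+1) i) (myF k i (Z s))) x0 s = Z s := by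
    intro s
    induction s with
    | zero => intro _; rw [hZ0]; rfl
    | succ s ih =>
      intro hs1
      have ihs := ih (by omega)
      funext i
      simp only [traj]
      by_cases hiU : i ∈ U
      · rw [if_pos hiU, ihs]
        cases Z (s+1) i <;> cases myF k i (Z s) <;> rfl
      · rw [if_neg hiU, ihs]
        have hi0 : i.val % k ≠ 0 := fun h0 => hiU ((hU i).mpr h0)
        exact (hZstep s (by omega) i hi0).symm
  rw [key (2*k+1) le_rfl, hZe]

lemma card_Uset (hk : 0 < k) (hdvd : k ∣ n) :
    (Finset.univ.filter (fun i : Fin n => i.val % k = 0)).card = n / k := by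
  have himg : Finset.univ.filter (fun i : Fin n => i.val % k = 0)
      = Finset.image (fun b : Fin (n / k) =>
          (⟨b.val * k, by have := node_lt hk hdvd b.isLt hk; omega⟩ : Fin n)) Finset.univ := by
    apply Finset.ext
    intro i
    simp only [Finset.mem_filter, Finset.mem_univ, true_and, Finset.mem_image]
    constructor
    · intro h0
      have hq : i.val / k < n / k := Nat.div_lt_div_of_lt_of_dvd hdvd i.isLt
      refine ⟨⟨i.val / k, hq⟩, ?_⟩
      apply Fin.ext
      show i.val / k * k = i.val
      have hd := Nat.div_add_mod i.val k
      have hc : i.val / k * k = k * (i.val / k) := Nat.mul_comm _ _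
      omega
    · rintro ⟨b, rfl⟩
      show b.val * k % k = 0
      exact Nat.mul_mod_left _ _
  rw [himg, Finset.card_image_of_injective _ ?_, Finset.card_univ, Fintype.card_fin]
  intro b1 b2 he
  have hv : b1.val * k = b2.val * k := congrArg Fin.val he
  exact Fin.ext (Nat.eq_of_mul_eq_mul_right hk hv)

lemma lower_bound_myF (hk2 : 2 ≤ k) (hdvd : k ∣ n) (U : Finset (Fin n))
    (hc : IsControlSet (myF k) U) : n / k ≤ U.card := by
  have hk : 0 < k := by omega
  have hblocks : ∀ b, b < n / k → ∃ i ∈ U, i.val / k = b := by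
    intro b hb
    by_contra hno
    push_neg at hno
    have h1v : b * k + 1 < n := node_lt hk hdvd hb (by omega)
    have h0v : b * k < n := by omega
    set i0 : Fin n := ⟨b * k, h0v⟩ with hi0def
    set i1 : Fin n := ⟨b * k + 1, h1v⟩ with hi1def
    have hd0 : i0.val / k = b := by
      show b * k / k = b
      rw [Nat.mul_div_cancel _ hk]
    have hd1 : i1.val / k = b := by
      show (b * k + 1) / k = b
      rw [Nat.add_comm, Nat.add_mul_div_right _ _ hk, Nat.div_eq_of_lt (by omega)]
      omega
    have hm0 : i0.val % k = 0 := Nat.mul_mod_left _ _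
    have hm1 : i1.val % k = 1 := by
      show (b * k + 1) % k = 1
      rw [Nat.add_comm, Nat.add_mul_mod_self_right, Nat.mod_eq_of_lt (by omega)]
    have hi0U : i0 ∉ U := fun h => hno i0 h hd0
    have hi1U : i1 ∉ U := fun h => hno i1 h hd1
    obtain ⟨t, ht1, u, hu⟩ := hc (fun _ => false) (fun i => if i = i1 then false else true)
    obtain ⟨s, rfl⟩ : ∃ s, t = s + 1 := ⟨t - 1, by omega⟩
    have e0 : traj (myF k) U u (fun _ => false) (s+1) i0 = true := by
      rw [hu]
      show (if i0 = i1 then false else true) = true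
      rw [if_neg]
      intro he
      have hvv := congrArg Fin.val he
      rw [hi0def, hi1def] at hvv
      simp at hvv
    have e1 : traj (myF k) U u (fun _ => false) (s+1) i1 = false := by
      rw [hu]
      show (if i1 = i1 then false else true) = false
      rw [if_pos rfl]
    have t0 : traj (myF k) U u (fun _ => false) (s+1) i0
        = myF k i0 (traj (myF k) U u (fun _ => false) s) := by
      simp only [traj, if_neg hi0U]
    have t1 : traj (myF k) U u (fun _ => false) (s+1) i1
        = myF k i1 (traj (myF k) U u (fun _ => false) s) := by
      simp only [traj, if_neg hi1U]
    set prev := traj (myF k) U u (fun _ => false) s with hprev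
    rw [t0] at e0
    rw [t1] at e1
    have hall : ∀ j ∈ blkF k i0, prev j = true := by
      unfold myF at e0
      rw [if_pos hm0] at e0
      exact of_decide_eq_true e0
    have hp : predF i1 = i0 := by
      apply Fin.ext
      show b * k + 1 - 1 = b * k
      omega
    have hmem : i0 ∈ blkF k i1 := by
      rw [mem_blkF, hd0, hd1]
    have hfin : myF k i1 prev = true := by
      rw [myF_shift hk (by rw [hm1]; omega) ⟨i0, hmem, hall i0 (self_mem_blkF k i0)⟩, hp]
      exact hall i0 (self_mem_blkF k i0)
    rw [hfin] at e1
    exact Bool.noConfusion e1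
  have himg : Finset.range (n / k) ⊆ U.image (fun i : Fin n => i.val / k) := by
    intro b hb
    rw [Finset.mem_range] at hb
    obtain ⟨i, hiU, hib⟩ := hblocks b hb
    rw [Finset.mem_image]
    exact ⟨i, hiU, hib⟩
  calc n / k = (Finset.range (n / k)).card := (Finset.card_range _).symm
    _ ≤ (U.image (fun i : Fin n => i.val / k)).card := Finset.card_le_card himg
    _ ≤ U.card := Finset.card_image_le

end Construction

/-- For all `k ≥ 2` and `n > 2` with `k ∣ n`, there exists a `k`-`k`-NC-BN
on `n` nodes whose minimum control node set has size `n / k`. -/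
theorem stmt17 (k n : ℕ) (hk : 2 ≤ k) (hn : 2 < n) (hdvd : k ∣ n) :
    ∃ F : Fin n → (Fin n → Bool) → Bool, IsKKNCBN k F ∧
      (∃ U : Finset (Fin n), IsControlSet F U ∧ U.card = n / k) ∧
      ∀ U : Finset (Fin n), IsControlSet F U → n / k ≤ U.card := by
  have hk0 : 0 < k := by omega
  refine ⟨myF k, ⟨?_, ?_⟩, ⟨Finset.univ.filter (fun i : Fin n => i.val % k = 0), ?_, ?_⟩, ?_⟩
  · intro i
    exact ⟨blkF k i, card_blkF hk0 hdvd i, isNC_myF hk0 i⟩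
  · intro i
    constructor
    · rw [inSet_eq hk0 i, Set.ncard_coe_finset, card_blkF hk0 hdvd i]
    · rw [outSet_eq hk0 i, Set.ncard_coe_finset, card_blkF hk0 hdvd i]
  · apply isControlSet_myF hk hdvd
    intro i
    simp [Finset.mem_filter]
  · exact card_Uset hk0 hdvd
  · intro U hU
    exact lower_bound_myF hk hdvd U hU

end BN
end

section
/- Let N be a simple 2-2-AND-BN on n nodes and let U be a control node set for N. Then no node outside U has a self-loop; that is, for every node x_i ∉ U, x_i ∉ Γ⁺(x_i) (equivalently, f_i does not depend on x_i itself). -/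
namespace BN

variable {n : ℕ}

/-- AND of the inputs in `S` (no negations). -/
def andFun (S : Finset (Fin n)) (x : Fin n → Bool) : Bool :=
  decide (∀ j ∈ S, x j = true)

/-- `f` is the conjunction of `k` distinct inputs (no negations). -/
def IsSimpleKAnd (k : ℕ) (f : (Fin n → Bool) → Bool) : Prop :=
  ∃ S : Finset (Fin n), S.card = k ∧ f = andFun S

/-- A simple `k`-`k`-AND-BN: each function is a `k`-input AND (no negations) and
every node has indegree `k` and outdegree `k`. -/
def IsSimpleKKAndBN (k : ℕ) (F : Fin n → (Fin n → Bool) → Bool) : Prop :=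
  (∀ i, IsSimpleKAnd k (F i)) ∧ ∀ i, (inSet F i).ncard = k ∧ (outSet F i).ncard = k

/-- In a simple 2-2-AND-BN with control node set `U`, no node outside `U`
has a self-loop: for every `i ∉ U`, `i ∉ Γ⁺(i)` (i.e. `f_i` does not depend on `x_i`). -/
theorem stmt18 (n : ℕ) (F : Fin n → (Fin n → Bool) → Bool) (hF : IsSimpleKKAndBN 2 F)
    (U : Finset (Fin n)) (hU : IsControlSet F U) (i : Fin n) (hi : i ∉ U) :
    i ∉ outSet F i := by
  intro hdep
  obtain ⟨S, hcard, hfi⟩ := hF.1 i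
  have hiS : i ∈ S := by
    by_contra hiS
    obtain ⟨x, hx⟩ := hdep
    apply hx
    rw [hfi]
    unfold andFun
    apply decide_eq_decide.mpr
    constructor <;> intro h j hj <;> have := h j hj <;>
      simpa [Function.update_of_ne (fun he : j = i => hiS (he ▸ hj))] using this
  obtain ⟨t, ht1, u, htraj⟩ := hU (fun _ => false) (fun _ => true)
  have hfalse : ∀ t, traj F U u (fun _ => false) t i = false := by
    intro t
    induction t with
    | zero => rfl
    | succ t ih =>
      show (if i ∈ U then _ else F i (traj F U u (fun _ => false) t)) = false
      rw [if_neg hi, hfi]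
      unfold andFun
      simp only [decide_eq_false_iff_not]
      intro h
      exact absurd (h i hiS) (by simp [ih])
  have := hfalse t
  rw [htraj] at this
  simp at this

end BN
end

section
/- Let k ≥ 2, let N be a k-k-AND-BN with negation on n nodes, and let U be a control node set for N. Then for every j = 1, …, ⌊k/2⌋ and every node x_i ∈ M_j, at least j of the outgoing nodes of x_i are control nodes; that is, |Γ⁺(x_i) ∩ U| ≥ j. -/
/-! In a network driven from some state to the all-`true` state, every conjunction outside `U`
is satisfied one step earlier. So every outgoing node of `i` whose literal of `x i` disagrees with
the value of `x i` at that moment must be a control node, and at least `min(posCount i, negCount i)`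
outgoing nodes of `i` are control nodes. For `i ∈ M j` with `j ≤ k / 2` that minimum is `j`. -/

namespace BN

variable {n : ℕ}

/-- A `k`-`k`-AND-BN with negation: node `i` is updated by the conjunction of literals
over the `k` distinct variables in `S i` with signs `sign i` (`true` = positive literal),
and every node occurs as an input to exactly `k` functions (outdegree `k`). -/
structure AndNegBN (n k : ℕ) where
  S : Fin n → Finset (Fin n)
  sign : Fin n → Fin n → Bool
  card_S : ∀ i, (S i).card = k
  outdeg : ∀ j : Fin n, (Finset.univ.filter fun i => j ∈ S i).card = k

namespace AndNegBN

variable {k : ℕ}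

/-- The update functions of the network. -/
def F (B : AndNegBN n k) : Fin n → (Fin n → Bool) → Bool :=
  fun i x => decide (∀ j ∈ B.S i, x j = B.sign i j)

/-- Number of occurrences of the positive literal `x i` among the update functions. -/
def posCount (B : AndNegBN n k) (i : Fin n) : ℕ :=
  (Finset.univ.filter fun l => i ∈ B.S l ∧ B.sign l i = true).card

/-- Number of occurrences of the negative literal `¬ x i` among the update functions. -/
def negCount (B : AndNegBN n k) (i : Fin n) : ℕ :=
  (Finset.univ.filter fun l => i ∈ B.S l ∧ B.sign l i = false).card

/-- `M j`: the set of nodes `i` such that one of the literals `x i`, `¬ x i` appears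
exactly `j` times and the other exactly `k - j` times. -/
def M (B : AndNegBN n k) (j : ℕ) : Finset (Fin n) :=
  Finset.univ.filter fun i =>
    (B.posCount i = j ∧ B.negCount i = k - j) ∨ (B.posCount i = k - j ∧ B.negCount i = j)

/-- The out-neighbors of node `i`: the nodes whose update function uses `i`. -/
def outNbrs (B : AndNegBN n k) (i : Fin n) : Finset (Fin n) :=
  Finset.univ.filter fun l => i ∈ B.S l

end AndNegBN

theorem traj_succ_of_notMem {F : Fin n → (Fin n → Bool) → Bool} {U : Finset (Fin n)}
    {u : ℕ → Fin n → Bool} {x0 : Fin n → Bool} {l : Fin n} (hl : l ∉ U) (t : ℕ) :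
    traj F U u x0 (t + 1) l = F l (traj F U u x0 t) := by
  simp [traj, hl]

namespace AndNegBN

variable {k : ℕ} {B : AndNegBN n k} {U : Finset (Fin n)}

theorem exists_sign_forall_mem_of_isControlSet (hU : IsControlSet B.F U) (i : Fin n) :
    ∃ b : Bool, ∀ l, i ∈ B.S l → B.sign l i = b → l ∈ U := by
  obtain ⟨t, ht, u, hu⟩ := hU (fun _ => false) (fun _ => true)
  obtain ⟨s, rfl⟩ : ∃ s, t = s + 1 := ⟨t - 1, by omega⟩
  refine ⟨!traj B.F U u (fun _ => false) s i, fun l hil hsign => ?_⟩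
  by_contra hl
  have hsat : B.F l (traj B.F U u (fun _ => false) s) = true := by
    rw [← traj_succ_of_notMem (F := B.F) (u := u) hl, hu]
  simp only [F, decide_eq_true_eq] at hsat
  simp [hsat i hil] at hsign

theorem card_filter_sign_le_card_outNbrs_inter {i : Fin n} {b : Bool}
    (hb : ∀ l, i ∈ B.S l → B.sign l i = b → l ∈ U) :
    (Finset.univ.filter fun l => i ∈ B.S l ∧ B.sign l i = b).card ≤ (B.outNbrs i ∩ U).card :=
  Finset.card_le_card fun l hl => by
    simp only [Finset.mem_filter, Finset.mem_univ, true_and] at hl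
    simp [outNbrs, hl.1, hb l hl.1 hl.2]

theorem min_posCount_negCount_le_card_outNbrs_inter (hU : IsControlSet B.F U) (i : Fin n) :
    min (B.posCount i) (B.negCount i) ≤ (B.outNbrs i ∩ U).card := by
  obtain ⟨b, hb⟩ := exists_sign_forall_mem_of_isControlSet hU i
  cases b
  · exact (min_le_right _ _).trans (card_filter_sign_le_card_outNbrs_inter hb)
  · exact (min_le_left _ _).trans (card_filter_sign_le_card_outNbrs_inter hb)

theorem le_min_posCount_negCount_of_mem_M {j : ℕ} (hj : j ≤ k / 2) {i : Fin n} (hi : i ∈ B.M j) :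
    j ≤ min (B.posCount i) (B.negCount i) := by
  simp only [M, Finset.mem_filter, Finset.mem_univ, true_and] at hi
  omega

end AndNegBN

theorem stmt19_general (n k : ℕ) (B : AndNegBN n k) (U : Finset (Fin n))
    (hU : IsControlSet B.F U) (j : ℕ) (hj2 : j ≤ k / 2)
    (i : Fin n) (hi : i ∈ B.M j) :
    j ≤ (B.outNbrs i ∩ U).card :=
  (AndNegBN.le_min_posCount_negCount_of_mem_M hj2 hi).trans
    (AndNegBN.min_posCount_negCount_le_card_outNbrs_inter hU i)

/-- In a `k`-`k`-AND-BN with negation (`k ≥ 2`) with control node set `U`,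
for every `j = 1, …, ⌊k/2⌋` and every node `i ∈ M_j`, at least `j` of the outgoing
nodes of `i` are control nodes: `|Γ⁺(i) ∩ U| ≥ j`. -/
theorem stmt19 (n k : ℕ) (hk : 2 ≤ k) (B : AndNegBN n k) (U : Finset (Fin n))
    (hU : IsControlSet B.F U) (j : ℕ) (hj1 : 1 ≤ j) (hj2 : j ≤ k / 2)
    (i : Fin n) (hi : i ∈ B.M j) :
    j ≤ (B.outNbrs i ∩ U).card :=
  stmt19_general n k B U hU j hj2 i hi

end BN
end
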